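/- Let (δ_t)_{t≥1} be i.i.d. real random variables with E[e^{ω₀ δ_1}] = 1 for some ω₀ > 0, and define the CUSUM statistic s_0 = 0, s_t = max(s_{t-1} + δ_t, 0). Let T = inf{t : s_t ≥ h} for threshold h > 0. Then E[T] ≥ e^{ω₀ h}. -/

import Mathlib

open MeasureTheory ProbabilityTheory Real ENNReal

open Function

/-!
Call `k` a restart time if the statistic is `0` at time `k` and has not yet reached `h`. On the
event that `h` is ever reached, the statistic coincides after the last restart time `k` before the
alarm with the random walk `∑_{k < i ≤ t} δ i`, which therefore reaches `h`. As
`exp (ω₀ ∑_{k < i ≤ t} δ i)` is a mean-one product martingale independent of the past up to `k`,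
Ville's inequality gives `e^{ω₀ h} P(k is a restart time, the walk from k reaches h) ≤
P(k is a restart time)`. Summing over `k`, `e^{ω₀ h} P(T < ∞) ≤ ∑_k P(T > k) = E[T]`; and if
`P(T = ∞) > 0` then `E[T] = ∞` anyway.
-/

section BlockSigma

variable {Ω ι β : Type*} [MeasurableSpace β] {X : ι → Ω → β}

abbrev blockSigma (X : ι → Ω → β) (I : Set ι) : MeasurableSpace Ω :=
  ⨆ i ∈ I, MeasurableSpace.comap (X i) ‹MeasurableSpace β›

lemma blockSigma_le [MeasurableSpace Ω] (hX : ∀ i, Measurable (X i)) (I : Set ι) :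
    blockSigma X I ≤ ‹MeasurableSpace Ω› :=
  iSup₂_le fun i _ => (hX i).comap_le

lemma blockSigma_mono {I J : Set ι} (hIJ : I ⊆ J) : blockSigma X I ≤ blockSigma X J :=
  biSup_mono hIJ

lemma measurable_blockSigma {i : ι} {I : Set ι} (hi : i ∈ I) :
    Measurable[blockSigma X I] (X i) :=
  (comap_measurable (X i)).mono
    (le_iSup₂ (f := fun j (_ : j ∈ I) => MeasurableSpace.comap (X j) _) i hi) le_rfl

lemma ProbabilityTheory.iIndepFun.lintegral_mul_eq_of_disjoint [MeasurableSpace Ω]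
    {μ : Measure Ω} (hindep : iIndepFun X μ) (hX : ∀ i, Measurable (X i)) {I J : Set ι}
    (hIJ : Disjoint I J) {f g : Ω → ℝ≥0∞}
    (hf : Measurable[blockSigma X I] f) (hg : Measurable[blockSigma X J] g) :
    ∫⁻ ω, f ω * g ω ∂μ = (∫⁻ ω, f ω ∂μ) * ∫⁻ ω, g ω ∂μ :=
  lintegral_mul_eq_lintegral_mul_lintegral_of_independent_measurableSpace
    (blockSigma_le hX I) (blockSigma_le hX J)
    (indep_iSup_of_disjoint (fun i => (hX i).comap_le) hindep hIJ) hf hg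

end BlockSigma

section ExpWeight

variable {Ω ι : Type*} {X : ι → Ω → ℝ} {θ : ℝ}

lemma measurable_sum_blockSigma {I : Set ι} {s : Finset ι} (hs : ↑s ⊆ I) :
    Measurable[blockSigma X I] (fun ω => ∑ i ∈ s, X i ω) :=
  Finset.measurable_sum s fun _ hi => measurable_blockSigma (hs hi)

noncomputable def expWeight (θ : ℝ) (X : ι → Ω → ℝ) (s : Finset ι) (ω : Ω) : ℝ≥0∞ :=
  ENNReal.ofReal (Real.exp (θ * ∑ i ∈ s, X i ω))

lemma expWeight_union [DecidableEq ι] {s u : Finset ι} (hsu : Disjoint s u) :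
    expWeight θ X (s ∪ u) = expWeight θ X s * expWeight θ X u := by
  ext ω
  simp only [expWeight, Pi.mul_apply, Finset.sum_union hsu, mul_add, Real.exp_add,
    ENNReal.ofReal_mul (Real.exp_pos _).le]

lemma measurable_expWeight {I : Set ι} {s : Finset ι} (hs : ↑s ⊆ I) :
    Measurable[blockSigma X I] (expWeight θ X s) :=
  ((measurable_sum_blockSigma hs).const_mul θ).exp.ennreal_ofReal

variable [MeasurableSpace Ω] {μ : Measure Ω}

lemma lintegral_expWeight (hindep : iIndepFun X μ) (hX : ∀ i, Measurable (X i))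
    (hmgf : ∀ i, mgf (X i) μ θ = 1) (s : Finset ι) :
    ∫⁻ ω, expWeight θ X s ω ∂μ = 1 := by
  have hmgf_sum : ∫ ω, Real.exp (θ * ∑ i ∈ s, X i ω) ∂μ = 1 := by
    have := hindep.mgf_sum hX s (t := θ)
    simp only [hmgf, Finset.prod_const_one] at this
    simpa [mgf] using this
  unfold expWeight
  rw [← ofReal_integral_eq_lintegral_ofReal
    (Integrable.of_integral_ne_zero (by rw [hmgf_sum]; exact one_ne_zero))
    (ae_of_all _ fun _ => (Real.exp_pos _).le), hmgf_sum, ENNReal.ofReal_one]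

lemma setLIntegral_expWeight_union [DecidableEq ι] (hindep : iIndepFun X μ)
    (hX : ∀ i, Measurable (X i)) (hmgf : ∀ i, mgf (X i) μ θ = 1) {I J : Set ι}
    (hIJ : Disjoint I J) {s u : Finset ι} (hs : ↑s ⊆ I) (hu : ↑u ⊆ J) {A : Set Ω}
    (hA : MeasurableSet[blockSigma X I] A) :
    ∫⁻ ω in A, expWeight θ X (s ∪ u) ω ∂μ = ∫⁻ ω in A, expWeight θ X s ω ∂μ := by
  have hsu : Disjoint s u := Finset.disjoint_coe.mp (hIJ.mono hs hu)
  have hA' : MeasurableSet A := blockSigma_le hX I A hA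
  rw [← lintegral_indicator hA', ← lintegral_indicator hA']
  calc ∫⁻ ω, A.indicator (expWeight θ X (s ∪ u)) ω ∂μ
      = ∫⁻ ω, A.indicator (expWeight θ X s) ω * expWeight θ X u ω ∂μ := by
        rw [expWeight_union hsu]
        exact lintegral_congr fun ω => Set.indicator_mul_left _ _ _
    _ = ∫⁻ ω, A.indicator (expWeight θ X s) ω ∂μ := by
        rw [hindep.lintegral_mul_eq_of_disjoint hX hIJ ((measurable_expWeight hs).indicator hA)
          (measurable_expWeight hu), lintegral_expWeight hindep hX hmgf, mul_one]

end ExpWeight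

section FirstPassage

variable {Ω : Type*} {X : ℕ → Ω → ℝ} {θ h : ℝ} {k : ℕ}

def firstPassage (X : ℕ → Ω → ℝ) (k : ℕ) (h : ℝ) (m : ℕ) : Set Ω :=
  {ω | h ≤ ∑ i ∈ Finset.Ioc k (k + m), X i ω ∧ ∀ j < m, ∑ i ∈ Finset.Ioc k (k + j), X i ω < h}

lemma pairwise_disjoint_firstPassage : Pairwise (Disjoint on firstPassage X k h) :=
  (pairwise_disjoint_on _).mpr fun _ _ hmn =>
    Set.disjoint_left.mpr fun _ hm hn => (hn.2 _ hmn).not_ge hm.1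

lemma iUnion_firstPassage :
    ⋃ m, firstPassage X k h m = {ω | ∃ m, h ≤ ∑ i ∈ Finset.Ioc k (k + m), X i ω} := by
  ext ω
  simp only [Set.mem_iUnion, Set.mem_ofPred_eq]
  constructor
  · rintro ⟨m, hm, -⟩
    exact ⟨m, hm⟩
  · intro hex
    classical
    exact ⟨Nat.find hex, Nat.find_spec hex, fun j hj => not_le.mp (Nat.find_min hex hj)⟩

lemma measurableSet_firstPassage (m : ℕ) :
    MeasurableSet[blockSigma X (Set.Iic (k + m))] (firstPassage X k h m) := by
  have hsum : ∀ j ≤ m, Measurable[blockSigma X (Set.Iic (k + m))]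
      (fun ω => ∑ i ∈ Finset.Ioc k (k + j), X i ω) := fun j hj =>
    measurable_sum_blockSigma fun i hi => by
      simp only [Finset.coe_Ioc, Set.mem_Ioc, Set.mem_Iic] at hi ⊢; omega
  simp only [firstPassage, Set.ofPred_and, Set.ofPred_forall]
  exact (measurableSet_le measurable_const (hsum m le_rfl)).inter
    (.iInter fun j => .iInter fun hj => measurableSet_lt (hsum j hj.le) measurable_const)

variable [MeasurableSpace Ω] {μ : Measure Ω}

lemma ofReal_exp_mul_measure_le_setLIntegral_expWeight (hindep : iIndepFun X μ)
    (hX : ∀ i, Measurable (X i)) (hmgf : ∀ i, mgf (X i) μ θ = 1) (hθ : 0 ≤ θ) {m n : ℕ}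
    (hmn : m ≤ n) {A : Set Ω} (hA : MeasurableSet[blockSigma X (Set.Iic (k + m))] A)
    (hAh : ∀ ω ∈ A, h ≤ ∑ i ∈ Finset.Ioc k (k + m), X i ω) :
    ENNReal.ofReal (Real.exp (θ * h)) * μ A ≤
      ∫⁻ ω in A, expWeight θ X (Finset.Ioc k (k + n)) ω ∂μ := by
  calc ENNReal.ofReal (Real.exp (θ * h)) * μ A
      = ∫⁻ _ in A, ENNReal.ofReal (Real.exp (θ * h)) ∂μ := (setLIntegral_const _ _).symm
    _ ≤ ∫⁻ ω in A, expWeight θ X (Finset.Ioc k (k + m)) ω ∂μ :=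
        setLIntegral_mono' (blockSigma_le hX _ A hA) fun ω hω =>
          ENNReal.ofReal_le_ofReal <|
            Real.exp_le_exp.mpr (mul_le_mul_of_nonneg_left (hAh ω hω) hθ)
    _ = ∫⁻ ω in A, expWeight θ X (Finset.Ioc k (k + m) ∪ Finset.Ioc (k + m) (k + n)) ω ∂μ :=
        (setLIntegral_expWeight_union hindep hX hmgf (Set.Iic_disjoint_Ioi le_rfl)
          (by simpa using Set.Ioc_subset_Iic_self) (by simpa using Set.Ioc_subset_Ioi_self)
          hA).symm
    _ = ∫⁻ ω in A, expWeight θ X (Finset.Ioc k (k + n)) ω ∂μ := by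
        rw [Finset.Ioc_union_Ioc_eq_Ioc (by omega) (by omega)]

lemma setLIntegral_expWeight_eq_measure (hindep : iIndepFun X μ) (hX : ∀ i, Measurable (X i))
    (hmgf : ∀ i, mgf (X i) μ θ = 1) {B : Set Ω} (hB : MeasurableSet[blockSigma X (Set.Iic k)] B)
    (n : ℕ) : ∫⁻ ω in B, expWeight θ X (Finset.Ioc k n) ω ∂μ = μ B := by
  have := setLIntegral_expWeight_union (θ := θ) (s := ∅) (u := Finset.Ioc k n) hindep hX hmgf
    (Set.Iic_disjoint_Ioi le_rfl) (by simp) (by simpa using Set.Ioc_subset_Ioi_self) hB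
  simpa [expWeight] using this

theorem ofReal_exp_mul_measure_inter_le (hindep : iIndepFun X μ) (hX : ∀ i, Measurable (X i))
    (hmgf : ∀ i, mgf (X i) μ θ = 1) (hθ : 0 ≤ θ) (h : ℝ) {B : Set Ω}
    (hB : MeasurableSet[blockSigma X (Set.Iic k)] B) :
    ENNReal.ofReal (Real.exp (θ * h)) *
      μ (B ∩ {ω | ∃ m, h ≤ ∑ i ∈ Finset.Ioc k (k + m), X i ω}) ≤ μ B := by
  set c := ENNReal.ofReal (Real.exp (θ * h))
  set A : ℕ → Set Ω := fun m => B ∩ firstPassage X k h m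
  have hAσ (m : ℕ) : MeasurableSet[blockSigma X (Set.Iic (k + m))] (A m) :=
    (blockSigma_mono (Set.Iic_subset_Iic.mpr (Nat.le_add_right k m)) B hB).inter
      (measurableSet_firstPassage m)
  have hA (m : ℕ) : MeasurableSet (A m) := blockSigma_le hX _ _ (hAσ m)
  have hdisj : Pairwise (Disjoint on A) := fun m n hmn =>
    (pairwise_disjoint_firstPassage hmn).mono Set.inter_subset_right Set.inter_subset_right
  have horizon (n : ℕ) : c * ∑ m ∈ Finset.range n, μ (A m) ≤ μ B := by
    calc c * ∑ m ∈ Finset.range n, μ (A m)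
        = ∑ m ∈ Finset.range n, c * μ (A m) := Finset.mul_sum _ _ _
      _ ≤ ∑ m ∈ Finset.range n, ∫⁻ ω in A m, expWeight θ X (Finset.Ioc k (k + n)) ω ∂μ :=
          Finset.sum_le_sum fun m hm =>
            ofReal_exp_mul_measure_le_setLIntegral_expWeight hindep hX hmgf hθ
              (Finset.mem_range.mp hm).le (hAσ m) fun ω hω => hω.2.1
      _ = ∫⁻ ω in ⋃ m ∈ Finset.range n, A m, expWeight θ X (Finset.Ioc k (k + n)) ω ∂μ :=
          (lintegral_biUnion_finset (hdisj.set_pairwise _) (fun m _ => hA m) _).symm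
      _ ≤ ∫⁻ ω in B, expWeight θ X (Finset.Ioc k (k + n)) ω ∂μ :=
          lintegral_mono_set (Set.iUnion₂_subset fun m _ => Set.inter_subset_left)
      _ = μ B := setLIntegral_expWeight_eq_measure hindep hX hmgf hB _
  calc c * μ (B ∩ {ω | ∃ m, h ≤ ∑ i ∈ Finset.Ioc k (k + m), X i ω})
      = c * ∑' m, μ (A m) := by
        rw [← iUnion_firstPassage, Set.inter_iUnion, measure_iUnion hdisj hA]
    _ = ⨆ n, c * ∑ m ∈ Finset.range n, μ (A m) := by
        rw [ENNReal.tsum_eq_iSup_nat, ENNReal.mul_iSup]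
    _ ≤ μ B := iSup_le horizon

end FirstPassage

section Cusum

variable {Ω : Type*} {X : ℕ → Ω → ℝ} {h : ℝ}

def cusum (X : ℕ → Ω → ℝ) : ℕ → Ω → ℝ
  | 0 => 0
  | t + 1 => fun ω => max (cusum X t ω + X (t + 1) ω) 0

def cusumRestart (X : ℕ → Ω → ℝ) (h : ℝ) (k : ℕ) : Set Ω :=
  {ω | cusum X k ω = 0 ∧ ∀ j ≤ k, cusum X j ω < h}

lemma cusum_nonneg (t : ℕ) (ω : Ω) : 0 ≤ cusum X t ω := by
  cases t with
  | zero => exact le_rfl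
  | succ t => exact le_max_right _ _

lemma cusum_eq_add_sum_of_pos {k t : ℕ} {ω : Ω} (hkt : k ≤ t)
    (hpos : ∀ j, k < j → j ≤ t → 0 < cusum X j ω) :
    cusum X t ω = cusum X k ω + ∑ i ∈ Finset.Ioc k t, X i ω := by
  induction t, hkt using Nat.le_induction with
  | base => simp
  | succ t hkt ih =>
    have hmax : 0 < max (cusum X t ω + X (t + 1) ω) 0 := hpos (t + 1) (by omega) le_rfl
    rw [Finset.sum_Ioc_succ_top hkt, ← add_assoc,
      ← ih fun j hj hjt => hpos j hj (by omega)]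
    exact max_eq_left (lt_max_iff.mp hmax |>.resolve_right (lt_irrefl 0)).le

lemma subset_iUnion_cusumRestart (hh : 0 < h) :
    {ω | ∃ t, h ≤ cusum X t ω} ⊆
      ⋃ k, cusumRestart X h k ∩ {ω | ∃ m, h ≤ ∑ i ∈ Finset.Ioc k (k + m), X i ω} := by
  classical
  rintro ω hex
  set t := Nat.find hex
  have hbelow : ∀ j < t, cusum X j ω < h := fun j hj => not_le.mp (Nat.find_min hex hj)
  -- the last time before the alarm at which the statistic is at zero
  set k := Nat.findGreatest (fun j => cusum X j ω = 0) t
  have hk : cusum X k ω = 0 :=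
    Nat.findGreatest_spec (P := fun j => cusum X j ω = 0) (Nat.zero_le t) rfl
  have hkt : k < t := lt_of_le_of_ne (Nat.findGreatest_le t) fun hkt =>
    hh.not_ge ((Nat.find_spec hex).trans (hkt ▸ hk).le)
  have hpos : ∀ j, k < j → j ≤ t → 0 < cusum X j ω := fun j hkj hjt =>
    (cusum_nonneg j ω).lt_of_ne' (Nat.findGreatest_is_greatest hkj hjt)
  refine Set.mem_iUnion.mpr ⟨k, ⟨hk, fun j hj => hbelow j (by omega)⟩, t - k, ?_⟩
  rw [Nat.add_sub_cancel' hkt.le, ← zero_add (∑ i ∈ _, _), ← hk,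
    ← cusum_eq_add_sum_of_pos hkt.le hpos]
  exact Nat.find_spec hex

lemma tsum_indicator_cusumRestart_le (ω : Ω) :
    ∑' k, (cusumRestart X h k).indicator 1 ω ≤ ⨅ (t : ℕ) (_ : h ≤ cusum X t ω), (t : ℝ≥0∞) := by
  refine le_iInf₂ fun t ht => ?_
  have hsupp : ∀ k ∉ Finset.range t, (cusumRestart X h k).indicator (1 : Ω → ℝ≥0∞) ω = 0 :=
    fun k hk => Set.indicator_of_notMem
      (fun hω => (hω.2 t (by simpa using hk)).not_ge ht) _
  calc ∑' k, (cusumRestart X h k).indicator 1 ω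
      = ∑ k ∈ Finset.range t, (cusumRestart X h k).indicator 1 ω := tsum_eq_sum hsupp
    _ ≤ ∑ _k ∈ Finset.range t, (1 : ℝ≥0∞) :=
        Finset.sum_le_sum fun k _ => Set.indicator_le_self' (fun _ _ => zero_le) ω
    _ = t := by simp

lemma measurable_cusum (t : ℕ) : Measurable[blockSigma X (Set.Iic t)] (cusum X t) := by
  induction t with
  | zero => exact measurable_const
  | succ t ih =>
    exact ((ih.mono (blockSigma_mono (Set.Iic_subset_Iic.mpr t.le_succ)) le_rfl).add
      (measurable_blockSigma Set.self_mem_Iic)).max measurable_const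

lemma measurableSet_cusumRestart (k : ℕ) :
    MeasurableSet[blockSigma X (Set.Iic k)] (cusumRestart X h k) := by
  simp only [cusumRestart, Set.ofPred_and, Set.ofPred_forall]
  exact (measurable_cusum k (measurableSet_singleton 0)).inter
    (.iInter fun j => .iInter fun hj => measurableSet_lt
      ((measurable_cusum j).mono (blockSigma_mono (Set.Iic_subset_Iic.mpr hj)) le_rfl)
      measurable_const)

variable [MeasurableSpace Ω] {μ : Measure Ω}

lemma measurableSet_exists_le_cusum (hX : ∀ i, Measurable (X i)) :
    MeasurableSet {ω | ∃ t, h ≤ cusum X t ω} := by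
  rw [Set.ofPred_exists]
  exact .iUnion fun t => measurableSet_le measurable_const
    ((measurable_cusum t).mono (blockSigma_le hX _) le_rfl)

lemma tsum_measure_cusumRestart_le_lintegral (hX : ∀ i, Measurable (X i)) :
    ∑' k, μ (cusumRestart X h k) ≤ ∫⁻ ω, (⨅ (t : ℕ) (_ : h ≤ cusum X t ω), (t : ℝ≥0∞)) ∂μ := by
  have hrestart (k : ℕ) : MeasurableSet (cusumRestart X h k) :=
    blockSigma_le hX _ _ (measurableSet_cusumRestart k)
  calc ∑' k, μ (cusumRestart X h k)
      = ∫⁻ ω, ∑' k, (cusumRestart X h k).indicator 1 ω ∂μ := by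
        rw [lintegral_tsum fun k => (measurable_one.indicator (hrestart k)).aemeasurable]
        simp only [lintegral_indicator_one (hrestart _)]
    _ ≤ _ := lintegral_mono tsum_indicator_cusumRestart_le

end Cusum

lemma le_lintegral_of_mul_measure_le {Ω : Type*} [MeasurableSpace Ω] {μ : Measure Ω}
    [IsProbabilityMeasure μ] {f : Ω → ℝ≥0∞} {E : Set Ω} {c : ℝ≥0∞} (hE : MeasurableSet E)
    (hf : ∀ ω ∉ E, f ω = ⊤) (hc : c * μ E ≤ ∫⁻ ω, f ω ∂μ) : c ≤ ∫⁻ ω, f ω ∂μ := by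
  by_cases hEc : μ Eᶜ = 0
  · rwa [(prob_compl_eq_zero_iff hE).mp hEc, mul_one] at hc
  · refine le_top.trans (eq_top_iff.mpr ?_).ge
    calc ⊤ = ∫⁻ _ in Eᶜ, ⊤ ∂μ := by rw [setLIntegral_const, top_mul hEc]
      _ ≤ ∫⁻ ω in Eᶜ, f ω ∂μ := setLIntegral_mono' hE.compl fun ω hω => (hf ω hω).ge
      _ ≤ ∫⁻ ω, f ω ∂μ := setLIntegral_le_lintegral _ _

/-- For i.i.d. increments `δ_t` with `E[e^{ω₀ δ_1}] = 1`, `ω₀ > 0`, the CUSUM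
statistic `s_0 = 0`, `s_t = max(s_{t-1} + δ_t, 0)` and stopping time
`T = inf{t : s_t ≥ h}` (threshold `h > 0`) satisfy `E[T] ≥ e^{ω₀ h}`. -/
theorem cusum_arl_lower_bound
    {Ω : Type*} [MeasurableSpace Ω] (μ : Measure Ω) [IsProbabilityMeasure μ]
    (δ : ℕ → Ω → ℝ) (hmeas : ∀ t, Measurable (δ t))
    (hindep : iIndepFun δ μ)
    (hident : ∀ t, Measure.map (δ t) μ = Measure.map (δ 1) μ)
    (ω₀ : ℝ) (hω₀ : 0 < ω₀)
    (hmgf : ∫ ω, Real.exp (ω₀ * δ 1 ω) ∂μ = 1)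
    (s : ℕ → Ω → ℝ)
    (hs0 : ∀ ω, s 0 ω = 0)
    (hs : ∀ t ω, s (t + 1) ω = max (s t ω + δ (t + 1) ω) 0)
    (h : ℝ) (hh : 0 < h) :
    ENNReal.ofReal (Real.exp (ω₀ * h)) ≤
      ∫⁻ ω, (⨅ (t : ℕ) (_ : h ≤ s t ω), (t : ℝ≥0∞)) ∂μ := by
  obtain rfl : s = cusum δ := by
    funext t ω
    induction t with
    | zero => exact hs0 ω
    | succ t ih => rw [hs, ih]; rfl
  have hmgf_all (i : ℕ) : mgf (δ i) μ ω₀ = 1 :=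
    (mgf_congr_of_identDistrib _ _
      ⟨(hmeas i).aemeasurable, (hmeas 1).aemeasurable, hident i⟩ ω₀).trans hmgf
  refine le_lintegral_of_mul_measure_le (measurableSet_exists_le_cusum hmeas)
    (fun ω hω => eq_top_iff.mpr (le_iInf₂ fun t ht => (hω ⟨t, ht⟩).elim)) ?_
  calc ENNReal.ofReal (Real.exp (ω₀ * h)) * μ {ω | ∃ t, h ≤ cusum δ t ω}
      ≤ ∑' k, ENNReal.ofReal (Real.exp (ω₀ * h)) *
          μ (cusumRestart δ h k ∩ {ω | ∃ m, h ≤ ∑ i ∈ Finset.Ioc k (k + m), δ i ω}) := by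
        rw [ENNReal.tsum_mul_left]
        gcongr
        exact (measure_mono (subset_iUnion_cusumRestart hh)).trans (measure_iUnion_le _)
    _ ≤ ∑' k, μ (cusumRestart δ h k) := ENNReal.tsum_le_tsum fun k =>
        ofReal_exp_mul_measure_inter_le hindep hmeas hmgf_all hω₀.le h
          (measurableSet_cusumRestart k)
    _ ≤ _ := tsum_measure_cusumRestart_le_lintegral hmeas
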